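/- Product rule identity at the level of power functions: for all quaternions q and all m, n ≥ 1, D(q^{m+n}) = q^m·Dr(q^n) + Dr(q^m)·q^n + Dr(q^m)·q̲·Dr(q^n) evaluated with the closed forms Dr(q^k) := D(q^k) = -2 ∑_{j=1}^{k} q^{k-j} q̄^{j-1} and q̲ = (q - q̄)/2; that is, -2 ∑_{j=1}^{m+n} q^{m+n-j} q̄^{j-1} = q^m·(-2∑_{j=1}^{n} q^{n-j} q̄^{j-1}) + (-2∑_{j=1}^{m} q^{m-j} q̄^{j-1})·q^n + (-2∑_{j=1}^{m} q^{m-j} q̄^{j-1})·q̲·(-2∑_{j=1}^{n} q^{n-j} q̄^{j-1}). -/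

import Mathlib

/-!
With `S k = ∑_{j<k} q^(k-1-j) q̄^j`, so that `Dpow q k = -2 S k`, splitting the range gives
`S (m+n) = q^m S n + S m q̄^n`. Since `q` commutes with `q̄`, the sum telescopes:
`(q - q̄) S n = q^n - q̄^n`, which turns `q̄^n` into `q^n - (q - q̄) S n`. Thus
`S (m+n) = q^m S n + S m q^n - S m (q - q̄) S n`, and multiplying by `-2` is the claim.
-/

open scoped Quaternion

open Finset

section GeomSum

variable {R : Type*}

theorem geom_sum₂_reflect [Semiring R] (x y : R) (n : ℕ) :
    ∑ j ∈ range n, x ^ (n - 1 - j) * y ^ j = ∑ i ∈ range n, x ^ i * y ^ (n - 1 - i) := by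
  rw [← sum_range_reflect]
  refine sum_congr rfl fun j hj => ?_
  rw [Nat.sub_sub_self (Nat.le_sub_one_of_lt (mem_range.mp hj))]

theorem geom_sum₂_reflect_add [Semiring R] (x y : R) (m n : ℕ) :
    ∑ j ∈ range (m + n), x ^ (m + n - 1 - j) * y ^ j =
      x ^ m * ∑ j ∈ range n, x ^ (n - 1 - j) * y ^ j +
        (∑ j ∈ range m, x ^ (m - 1 - j) * y ^ j) * y ^ n := by
  rw [add_comm m n, sum_range_add, mul_sum, sum_mul]
  congr 1 <;> refine sum_congr rfl fun j hj => ?_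
  · rw [← mul_assoc, ← pow_add]
    have := mem_range.mp hj
    congr 2
    omega
  · rw [mul_assoc, ← pow_add, add_comm j n]
    congr 2
    omega

theorem Commute.mul_geom_sum₂_reflect [Ring R] {x y : R} (h : Commute x y) (n : ℕ) :
    (x - y) * ∑ j ∈ range n, x ^ (n - 1 - j) * y ^ j = x ^ n - y ^ n := by
  rw [geom_sum₂_reflect, h.mul_geom_sum₂]

theorem Commute.geom_sum₂_reflect_add_eq [Ring R] {x y : R} (h : Commute x y) (m n : ℕ) :
    ∑ j ∈ range (m + n), x ^ (m + n - 1 - j) * y ^ j =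
      x ^ m * ∑ j ∈ range n, x ^ (n - 1 - j) * y ^ j +
        (∑ j ∈ range m, x ^ (m - 1 - j) * y ^ j) * x ^ n -
        (∑ j ∈ range m, x ^ (m - 1 - j) * y ^ j) * (x - y) *
          ∑ j ∈ range n, x ^ (n - 1 - j) * y ^ j := by
  rw [mul_assoc _ (x - y), h.mul_geom_sum₂_reflect, geom_sum₂_reflect_add]
  noncomm_ring

end GeomSum

/-- The closed form of the Fueter operator on monomials:
`D(q^k) = -2 ∑_{j=1}^{k} q^{k-j} q̄^{j-1}`. -/
noncomputable def Dpow (q : ℍ[ℝ]) (k : ℕ) : ℍ[ℝ] :=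
  -2 * ∑ j ∈ Finset.range k, q ^ (k - 1 - j) * (star q) ^ j

theorem Dpow_product_rule_general (q : ℍ[ℝ]) (m n : ℕ) :
    Dpow q (m + n) =
      q ^ m * Dpow q n + Dpow q m * q ^ n +
        Dpow q m * ((q - star q) / 2) * Dpow q n := by
  set half := (q - star q) / 2
  have two_mul_half : 2 * half = q - star q :=
    (Commute.ofNat_left 2 half).eq.trans
      (div_mul_cancel₀ _ fun h => two_ne_zero (congrArg QuaternionAlgebra.re h))
  rw [Dpow, (star_comm_self (x := q)).symm.geom_sum₂_reflect_add_eq, ← two_mul_half]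
  simp only [Dpow]
  noncomm_ring

/-- Product-rule identity at the level of power functions: for all `m, n ≥ 1`,
`D(q^{m+n}) = q^m·D(q^n) + D(q^m)·q^n + D(q^m)·q̲·D(q^n)` with `q̲ = (q - q̄)/2`. -/
theorem Dpow_product_rule (q : ℍ[ℝ]) (m n : ℕ) (hm : 1 ≤ m) (hn : 1 ≤ n) :
    Dpow q (m + n) =
      q ^ m * Dpow q n + Dpow q m * q ^ n +
        Dpow q m * ((q - star q) / 2) * Dpow q n :=
  Dpow_product_rule_general q m n
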